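/- arXiv:1202.0455 — 4 statements merged into one kernel-verified Lean document; each statement's English description precedes it below -/
import Mathlib

section
/- Let Λ ∈ ℝ^{n×n} be Metzler and let Λ̄ ∈ ℝ^{n×n} be Hurwitz with Λ̄ ⪰ Λ entrywise. Then there exists a diagonal matrix D = diag(d₁,…,d_n) with all d_i > 0 such that Λ̄'D + DΛ̄ is negative definite. -/
/-!
A Metzler Hurwitz matrix `M` is inverse-negative: for small `t > 0` the matrix `1 + t M` is
entrywise nonnegative and has spectral radius `< 1`, so by Gelfand's formula its Neumann series
converges and `(-M)⁻¹ = t ∑ₖ (1 + t M)ᵏ ≥ 0`. Hence there are `v, w > 0` with `M v = -1` and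
`Mᵀ w = -1`. With `D = diag (w / v)`, the symmetric Metzler matrix `Q = Mᵀ D + D M` satisfies
`Q v = -1 - w / v < 0`, and a symmetric Metzler matrix sending a positive vector to a negative
one is negative definite: writing `x = v y`,
`2 xᵀ Q x = 2 ∑ᵢ (Q v)ᵢ vᵢ yᵢ² - ∑ᵢⱼ Qᵢⱼ vᵢ vⱼ (yᵢ - yⱼ)²`, where only off-diagonal
`Qᵢⱼ ≥ 0` contribute to the last sum.
-/

open Matrix Filter Topology Pointwise

section BanachAlgebra

variable {A : Type*} [NormedRing A] [NormedAlgebra ℂ A] [CompleteSpace A]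

theorem summable_pow_of_spectralRadius_lt_one {a : A} (ha : spectralRadius ℂ a < 1) :
    Summable (a ^ ·) := by
  obtain ⟨r, hρr, hr1⟩ := ENNReal.lt_iff_exists_nnreal_btwn.mp ha
  refine Summable.of_norm_bounded_eventually_nat (g := fun k => (r : ℝ) ^ k)
    (summable_geometric_of_lt_one r.2 (by exact_mod_cast hr1)) ?_
  filter_upwards [(spectrum.pow_norm_pow_one_div_tendsto_nhds_spectralRadius a).eventually_lt_const
    hρr, eventually_gt_atTop 0] with k hk hk0
  rw [← ENNReal.ofReal_coe_nnreal, ENNReal.ofReal_lt_ofReal_iff_of_nonneg (by positivity),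
    one_div] at hk
  have hpow := (Real.rpow_inv_lt_iff_of_pos (norm_nonneg (a ^ k)) r.2 (Nat.cast_pos.mpr hk0)).mp hk
  rw [Real.rpow_natCast] at hpow
  exact hpow.le

theorem eventually_spectralRadius_one_add_smul_lt_one [Nontrivial A] {a : A}
    (ha : ∀ μ ∈ spectrum ℂ a, μ.re < 0) :
    ∀ᶠ t : ℝ in 𝓝[>] 0, spectralRadius ℂ (1 + (t : ℂ) • a) < 1 := by
  -- `‖1 + t μ‖ < 1` as soon as `t ‖μ‖² < -2 re μ`; compactness of the spectrum makes `t` uniform.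
  obtain ⟨C, hC⟩ : ∃ C, ∀ μ ∈ spectrum ℂ a, ‖‖μ‖ ^ 2 / -μ.re‖ ≤ C :=
    (spectrum.isCompact a).exists_bound_of_continuousOn <|
      ContinuousOn.div (by fun_prop) (by fun_prop) fun μ hμ => (neg_pos.mpr (ha μ hμ)).ne'
  have hsmall : ∀ᶠ t : ℝ in 𝓝[>] 0, t * C < 2 :=
    nhdsWithin_le_nhds <| (continuous_mul_const C).tendsto' 0 0 (zero_mul C)
      |>.eventually_lt_const two_pos
  filter_upwards [hsmall, self_mem_nhdsWithin] with t htC (ht : 0 < t)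
  have hspec : spectrum ℂ (1 + (t : ℂ) • a) = {1} + (t : ℂ) • spectrum ℂ a := by
    rw [← spectrum.smul_eq_smul _ _ (spectrum.nonempty a), spectrum.singleton_add_eq, map_one]
  refine spectrum.spectralRadius_lt_of_forall_lt (r := 1) _ fun z hz => ?_
  rw [hspec, Set.singleton_add, Set.mem_image] at hz
  obtain ⟨_, ⟨μ, hμ, rfl⟩, rfl⟩ := hz
  have hre : 0 < -μ.re := neg_pos.mpr (ha μ hμ)
  have hμC : ‖μ‖ ^ 2 ≤ C * -μ.re := by
    have := (le_abs_self _).trans ((Real.norm_eq_abs _).symm ▸ hC μ hμ)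
    rwa [div_le_iff₀ hre] at this
  have hsq : ‖1 + (t : ℂ) • μ‖ ^ 2 = 1 + 2 * t * μ.re + t ^ 2 * ‖μ‖ ^ 2 := by
    simp only [Complex.sq_norm, Complex.normSq_apply, smul_eq_mul, Complex.add_re,
      Complex.add_im, Complex.one_re, Complex.one_im, Complex.re_ofReal_mul, Complex.im_ofReal_mul]
    ring
  have hlt : ‖1 + (t : ℂ) • μ‖ ^ 2 < 1 := by
    rw [hsq]
    nlinarith [mul_le_mul_of_nonneg_left hμC (sq_nonneg t),
      mul_lt_mul_of_pos_right htC (mul_pos ht hre)]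
  rw [← NNReal.coe_lt_coe, coe_nnnorm, NNReal.coe_one]
  nlinarith [norm_nonneg (1 + (t : ℂ) • μ)]

end BanachAlgebra

namespace Matrix

variable {ι : Type*}

def IsMetzler (M : Matrix ι ι ℝ) : Prop := ∀ i j, i ≠ j → 0 ≤ M i j

def IsHurwitz [Fintype ι] [DecidableEq ι] (M : Matrix ι ι ℝ) : Prop :=
  ∀ μ ∈ spectrum ℂ (M.map Complex.ofReal), μ.re < 0

namespace IsMetzler

variable {M N : Matrix ι ι ℝ}

theorem transpose (hM : M.IsMetzler) : Mᵀ.IsMetzler := fun i j hij => hM j i hij.symm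

theorem add (hM : M.IsMetzler) (hN : N.IsMetzler) : (M + N).IsMetzler :=
  fun i j hij => add_nonneg (hM i j hij) (hN i j hij)

variable [Fintype ι] [DecidableEq ι] {d : ι → ℝ}

theorem mul_diagonal (hM : M.IsMetzler) (hd : ∀ i, 0 ≤ d i) : (M * diagonal d).IsMetzler :=
  fun i j hij => by simpa only [Matrix.mul_diagonal] using mul_nonneg (hM i j hij) (hd j)

theorem diagonal_mul (hM : M.IsMetzler) (hd : ∀ i, 0 ≤ d i) : (diagonal d * M).IsMetzler :=
  fun i j hij => by simpa only [Matrix.diagonal_mul] using mul_nonneg (hd i) (hM i j hij)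

theorem eventually_nonneg_one_add_smul (hM : M.IsMetzler) :
    ∀ᶠ t : ℝ in 𝓝[>] 0, ∀ i j, 0 ≤ (1 + t • M) i j := by
  have hdiag : ∀ i, ∀ᶠ t : ℝ in 𝓝[>] 0, 0 ≤ 1 + t * M i i := fun i =>
    nhdsWithin_le_nhds <| ((continuous_mul_const (M i i)).const_add 1).tendsto' 0 1 (by simp)
      |>.eventually_const_le zero_lt_one
  filter_upwards [eventually_all.mpr hdiag, self_mem_nhdsWithin] with t ht (ht0 : 0 < t) i j
  rcases eq_or_ne i j with rfl | hij
  · simpa using ht i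
  · simpa [one_apply_ne hij] using mul_nonneg ht0.le (hM i j hij)

end IsMetzler

section Quadratic

variable [Fintype ι]

theorem IsSymm.two_mul_dotProduct_mulVec {R : Type*} [CommRing R] {Q : Matrix ι ι R}
    (hQ : Q.IsSymm) (v y : ι → R) :
    2 * ((v * y) ⬝ᵥ Q *ᵥ (v * y)) =
      2 * ∑ i, (Q *ᵥ v) i * v i * y i ^ 2 - ∑ i, ∑ j, Q i j * v i * v j * (y i - y j) ^ 2 := by
  set D := ∑ i, ∑ j, Q i j * v i * v j * y i ^ 2
  have hdiag : ∑ i, (Q *ᵥ v) i * v i * y i ^ 2 = D := by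
    simp only [mulVec, dotProduct, Finset.sum_mul]
    refine Finset.sum_congr rfl fun i _ => Finset.sum_congr rfl fun j _ => ?_
    ring
  have hswap : ∑ i, ∑ j, Q i j * v i * v j * y j ^ 2 = D := by
    rw [Finset.sum_comm]
    refine Finset.sum_congr rfl fun i _ => Finset.sum_congr rfl fun j _ => ?_
    rw [hQ.apply i j]
    ring
  have hquad : (v * y) ⬝ᵥ Q *ᵥ (v * y) = ∑ i, ∑ j, Q i j * v i * v j * (y i * y j) := by
    simp only [dotProduct, mulVec, Pi.mul_apply, Finset.mul_sum]
    refine Finset.sum_congr rfl fun i _ => Finset.sum_congr rfl fun j _ => ?_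
    ring
  have hexpand : ∑ i, ∑ j, Q i j * v i * v j * (y i - y j) ^ 2 =
      D + ∑ i, ∑ j, Q i j * v i * v j * y j ^ 2
        - 2 * ∑ i, ∑ j, Q i j * v i * v j * (y i * y j) := by
    simp only [D, Finset.mul_sum, ← Finset.sum_add_distrib, ← Finset.sum_sub_distrib]
    refine Finset.sum_congr rfl fun i _ => Finset.sum_congr rfl fun j _ => ?_
    ring
  rw [hexpand, hswap, hdiag, hquad]
  ring

theorem IsMetzler.posDef_neg_of_mulVec_neg {Q : Matrix ι ι ℝ} (hM : Q.IsMetzler) (hQ : Q.IsSymm)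
    {v : ι → ℝ} (hv : ∀ i, 0 < v i) (hQv : ∀ i, (Q *ᵥ v) i < 0) : (-Q).PosDef := by
  refine PosDef.of_dotProduct_mulVec_pos
    ((conjTranspose_eq_transpose_of_trivial _).trans hQ.neg) fun x hx => ?_
  have hx_eq : x = v * (x / v) := by
    funext i
    simp [mul_div_cancel₀ _ (hv i).ne']
  obtain ⟨i₀, hi₀⟩ : ∃ i, (x / v) i ≠ 0 := by
    by_contra! h
    exact hx (by rw [hx_eq, show x / v = 0 from funext h, mul_zero])
  have hdiag : ∑ i, (Q *ᵥ v) i * v i * (x / v) i ^ 2 < 0 := by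
    refine (Finset.sum_lt_sum (fun i _ => ?_) ⟨i₀, Finset.mem_univ _, ?_⟩).trans_eq
      Finset.sum_const_zero
    · exact mul_nonpos_of_nonpos_of_nonneg
        (mul_nonpos_of_nonpos_of_nonneg (hQv i).le (hv i).le) (sq_nonneg _)
    · exact mul_neg_of_neg_of_pos (mul_neg_of_neg_of_pos (hQv i₀) (hv i₀)) (by positivity)
  have hoff : 0 ≤ ∑ i, ∑ j, Q i j * v i * v j * ((x / v) i - (x / v) j) ^ 2 := by
    refine Finset.sum_nonneg fun i _ => Finset.sum_nonneg fun j _ => ?_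
    rcases eq_or_ne i j with rfl | hij
    · simp
    · exact mul_nonneg (mul_nonneg (mul_nonneg (hM i j hij) (hv i).le) (hv j).le) (sq_nonneg _)
  have hid := hQ.two_mul_dotProduct_mulVec v (x / v)
  rw [← hx_eq] at hid
  rw [star_trivial, neg_mulVec, dotProduct_neg]
  linarith

end Quadratic

variable [Fintype ι] [DecidableEq ι] {M : Matrix ι ι ℝ}

theorem IsHurwitz.transpose (hM : M.IsHurwitz) : Mᵀ.IsHurwitz := fun μ hμ => by
  rw [transpose_map, mem_spectrum_iff_isRoot_charpoly, charpoly_transpose,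
    ← mem_spectrum_iff_isRoot_charpoly] at hμ
  exact hM μ hμ

theorem IsHurwitz.eventually_summable_pow_one_add_smul [Nonempty ι] (hM : M.IsHurwitz) :
    ∀ᶠ t : ℝ in 𝓝[>] 0, Summable ((1 + t • M) ^ ·) := by
  let _ := Matrix.linftyOpNormedRing (n := ι) (α := ℂ)
  let _ := Matrix.linftyOpNormedAlgebra (R := ℂ) (n := ι) (α := ℂ)
  filter_upwards [eventually_spectralRadius_one_add_smul_lt_one hM] with t ht
  have hmap : ∀ k, Complex.ofRealHom.mapMatrix ((1 + t • M) ^ k) =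
      (1 + (t : ℂ) • M.map Complex.ofReal) ^ k := fun k => by
    rw [map_pow, map_add, map_one]
    congr 2
    ext i j
    simp
  rw [← Summable.map_iff_of_leftInverse Complex.ofRealHom.toAddMonoidHom.mapMatrix
    Complex.reAddGroupHom.mapMatrix (continuous_id.matrix_map Complex.continuous_ofReal)
    (continuous_id.matrix_map Complex.continuous_re) fun x => by ext; simp]
  have hsum := summable_pow_of_spectralRadius_lt_one ht
  rw [← funext hmap] at hsum
  exact hsum

theorem exists_nonneg_one_sub_mul_eq_one {x : Matrix ι ι ℝ} (hx : ∀ i j, 0 ≤ x i j)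
    (hs : Summable (x ^ ·)) : ∃ S : Matrix ι ι ℝ, (∀ i j, 0 ≤ S i j) ∧ (1 - x) * S = 1 :=
  ⟨∑' k, x ^ k, fun i j => (Pi.hasSum.mp (Pi.hasSum.mp hs.hasSum i) j).nonneg
    fun k => pow_apply_nonneg hx k i j, hs.one_sub_mul_tsum_pow⟩

theorem IsMetzler.exists_nonneg_neg_mul_eq_one (hM : M.IsMetzler) (hH : M.IsHurwitz) :
    ∃ N : Matrix ι ι ℝ, (∀ i j, 0 ≤ N i j) ∧ -M * N = 1 := by
  cases isEmpty_or_nonempty ι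
  · exact ⟨0, fun i => isEmptyElim i, Subsingleton.elim _ _⟩
  obtain ⟨t, ⟨hsum, hnonneg⟩, ht⟩ := ((hH.eventually_summable_pow_one_add_smul.and
    hM.eventually_nonneg_one_add_smul).and self_mem_nhdsWithin).exists
  obtain ⟨S, hS, hSinv⟩ := exists_nonneg_one_sub_mul_eq_one hnonneg hsum
  refine ⟨t • S, fun i j => mul_nonneg (le_of_lt ht) (hS i j), ?_⟩
  rw [sub_add_cancel_left] at hSinv
  rwa [mul_smul_comm, ← smul_mul_assoc, smul_neg]

theorem IsMetzler.exists_pos_mulVec_eq_neg_one (hM : M.IsMetzler) (hH : M.IsHurwitz) :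
    ∃ v : ι → ℝ, (∀ i, 0 < v i) ∧ M *ᵥ v = -1 := by
  obtain ⟨N, hN, hMN⟩ := hM.exists_nonneg_neg_mul_eq_one hH
  have hNM : N * -M = 1 := mul_eq_one_comm.mp hMN
  refine ⟨N *ᵥ 1, fun i => ?_, ?_⟩
  · obtain ⟨j, hj⟩ : ∃ j, N i j ≠ 0 := by
      by_contra! h
      simpa [mul_apply, h] using congrFun (congrFun hNM i) i
    simp only [mulVec, dotProduct, Pi.one_apply, mul_one]
    exact Finset.sum_pos' (fun k _ => hN i k) ⟨j, Finset.mem_univ j, (hN i j).lt_of_ne' hj⟩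
  · rw [mulVec_mulVec, ← neg_neg M, neg_mul, hMN, neg_mulVec, one_mulVec]

end Matrix

/-- If `Λ` is Metzler and `Λ̄` is Hurwitz with `Λ̄ ⪰ Λ` entrywise, then there exists a
positive diagonal matrix `D` such that `Λ̄'D + DΛ̄` is negative definite. -/
theorem metzler_hurwitz_diag_lyapunov {n : ℕ} (Λ Λb : Matrix (Fin n) (Fin n) ℝ)
    (hMetz : ∀ i j, i ≠ j → 0 ≤ Λ i j)
    (hHur : ∀ μ ∈ spectrum ℂ (Λb.map Complex.ofReal), μ.re < 0)
    (hge : ∀ i j, Λ i j ≤ Λb i j) :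
    ∃ d : Fin n → ℝ, (∀ i, 0 < d i) ∧
      (-(Λbᵀ * Matrix.diagonal d + Matrix.diagonal d * Λb)).PosDef := by
  have hM : Λb.IsMetzler := fun i j hij => (hMetz i j hij).trans (hge i j)
  obtain ⟨v, hv, hMv⟩ := hM.exists_pos_mulVec_eq_neg_one hHur
  obtain ⟨w, hw, hMw⟩ := hM.transpose.exists_pos_mulVec_eq_neg_one (IsHurwitz.transpose hHur)
  have hd : ∀ i, 0 < (w / v) i := fun i => div_pos (hw i) (hv i)
  have hdv : diagonal (w / v) *ᵥ v = w := by
    funext i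
    simp [mulVec_diagonal, div_mul_cancel₀ _ (hv i).ne']
  refine ⟨w / v, hd, IsMetzler.posDef_neg_of_mulVec_neg ?_ ?_ hv fun i => ?_⟩
  · exact (hM.transpose.mul_diagonal fun i => (hd i).le).add (hM.diagonal_mul fun i => (hd i).le)
  · simpa [transpose_mul] using isSymm_transpose_add_self (diagonal (w / v) * Λb)
  · rw [add_mulVec, ← mulVec_mulVec, ← mulVec_mulVec, hdv, hMw, hMv]
    simpa [mulVec_diagonal] using neg_one_lt_zero.trans (hd i)
end

section
/- Let V ∈ ℂ^{n×n} be invertible, let A₁,…,A_N ∈ ℝ^{n×n}, set Λ_i = V⁻¹ A_i V, M_i = 𝓜(Λ_i), and Λ = max_i M_i (entrywise maximum). Suppose Λ̄ ∈ ℝ^{n×n} is Hurwitz with Λ̄ ⪰ Λ and D > 0 is a diagonal matrix with Λ̄'D + DΛ̄ < 0. Then the real symmetric matrix P = Re((V⁻¹)* D V⁻¹) is positive definite and satisfies A_i'P + P A_i < 0 for all i, i.e., P defines a common quadratic Lyapunov function for the A_i. -/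
/-! For real `x` put `z = V⁻¹x`. Then `xᵀPy = Re(z* D V⁻¹y)`, so `xᵀPx = ∑ dⱼ|zⱼ|² > 0`, and since
`V⁻¹Aᵢ = ΛᵢV⁻¹` also `xᵀPAᵢx = Re(z* D Λᵢ z)`. Each term `Re(z̄ⱼ (Λᵢ)ⱼₖ zₖ)` is at most
`𝓜(Λᵢ)ⱼₖ |zⱼ||zₖ| ≤ Λ̄ⱼₖ |zⱼ||zₖ|`, hence with `w = (|zⱼ|)ⱼ ≠ 0`
`xᵀ(AᵢᵀP + PAᵢ)x = 2 xᵀPAᵢx ≤ 2 wᵀDΛ̄w = wᵀ(Λ̄ᵀD + DΛ̄)w < 0`. -/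

open Matrix ComplexConjugate
open scoped ComplexOrder

namespace Matrix

variable {n : Type*} [Fintype n]

theorem dotProduct_map_re_mulVec (N : Matrix n n ℂ) (u v : n → ℝ) :
    u ⬝ᵥ N.map Complex.re *ᵥ v = (star (Complex.ofReal ∘ u) ⬝ᵥ N *ᵥ (Complex.ofReal ∘ v)).re := by
  simp only [dotProduct, mulVec, Finset.mul_sum, Complex.re_sum, map_apply, Function.comp_apply,
    Pi.star_apply, Complex.star_def, Complex.conj_ofReal]
  refine Finset.sum_congr rfl fun j _ => Finset.sum_congr rfl fun k _ => ?_
  simp only [Complex.mul_re, Complex.ofReal_re, Complex.ofReal_im]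
  ring

omit [Fintype n] in
theorem IsHermitian.isSymm_map_re {N : Matrix n n ℂ} (hN : N.IsHermitian) :
    (N.map Complex.re).IsSymm := by
  ext a b
  simp [← hN.apply a b]

theorem PosDef.map_re {N : Matrix n n ℂ} (hN : N.PosDef) : (N.map Complex.re).PosDef := by
  refine .of_dotProduct_mulVec_pos
    (isHermitian_iff_isSymm.mpr hN.isHermitian.isSymm_map_re) fun x hx => ?_
  have hx' : Complex.ofReal ∘ x ≠ 0 := fun h => hx <| funext fun j => by
    simpa using congrFun h j
  rw [star_trivial, dotProduct_map_re_mulVec]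
  exact (Complex.pos_iff.mp (hN.dotProduct_mulVec_pos hx')).1

theorem dotProduct_transpose_mul_add_mul_mulVec {R : Type*} [CommRing R] {S : Matrix n n R}
    (hS : S.IsSymm) (B : Matrix n n R) (x : n → R) :
    x ⬝ᵥ (Bᵀ * S + S * B) *ᵥ x = 2 * (x ⬝ᵥ S *ᵥ (B *ᵥ x)) := by
  have hBt : x ⬝ᵥ (Bᵀ * S) *ᵥ x = x ⬝ᵥ S *ᵥ (B *ᵥ x) := by
    rw [← mulVec_mulVec, dotProduct_mulVec, vecMul_transpose, dotProduct_comm,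
      ← vecMul_transpose, hS.eq, ← dotProduct_mulVec]
  rw [add_mulVec, dotProduct_add, hBt, ← mulVec_mulVec, two_mul]

theorem isSymm_transpose_mul_add_mul {R : Type*} [CommRing R] {S : Matrix n n R}
    (hS : S.IsSymm) (B : Matrix n n R) : (Bᵀ * S + S * B).IsSymm := by
  rw [IsSymm, transpose_add, transpose_mul, transpose_mul, transpose_transpose, hS.eq, add_comm]

theorem dotProduct_conjTranspose_mul_mul_mulVec {R : Type*} [CommRing R] [StarRing R]
    (B D : Matrix n n R) (u v : n → R) :
    star u ⬝ᵥ (Bᴴ * D * B) *ᵥ v = star (B *ᵥ u) ⬝ᵥ D *ᵥ (B *ᵥ v) := by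
  simp only [star_mulVec, dotProduct_mulVec, vecMul_vecMul, ← mulVec_mulVec, Matrix.mul_assoc]

/-- The matrix `𝓜(L)` of the paper. -/
noncomputable def metzlerMajorant [DecidableEq n] (L : Matrix n n ℂ) : Matrix n n ℝ :=
  of fun a b => if a = b then (L a a).re else ‖L a b‖

omit [Fintype n] in
theorem re_conj_mul_mul_le_metzlerMajorant [DecidableEq n] (L : Matrix n n ℂ) (z : n → ℂ)
    (j k : n) : (conj (z j) * (L j k * z k)).re ≤ metzlerMajorant L j k * (‖z j‖ * ‖z k‖) := by
  obtain rfl | hjk := eq_or_ne j k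
  · have : conj (z j) * (L j j * z j) = L j j * (Complex.normSq (z j) : ℂ) := by
      rw [Complex.normSq_eq_conj_mul_self]; ring
    rw [this, Complex.re_mul_ofReal, Complex.normSq_eq_norm_sq, metzlerMajorant, of_apply,
      if_pos rfl, sq]
  · calc (conj (z j) * (L j k * z k)).re ≤ ‖conj (z j) * (L j k * z k)‖ := Complex.re_le_norm _
      _ = metzlerMajorant L j k * (‖z j‖ * ‖z k‖) := by
        simp only [norm_mul, Complex.norm_conj, metzlerMajorant, of_apply, if_neg hjk]; ring

theorem re_star_dotProduct_diagonal_mulVec_le [DecidableEq n] {L : Matrix n n ℂ}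
    {C : Matrix n n ℝ} (hLC : ∀ j k, metzlerMajorant L j k ≤ C j k) {d : n → ℝ} (hd : 0 ≤ d)
    (z : n → ℂ) :
    (star z ⬝ᵥ diagonal (Complex.ofReal ∘ d) *ᵥ (L *ᵥ z)).re ≤
      (‖z ·‖) ⬝ᵥ diagonal d *ᵥ (C *ᵥ (‖z ·‖)) := by
  simp only [dotProduct, mulVec_diagonal]
  simp only [dotProduct, mulVec, Finset.mul_sum, Complex.re_sum, Pi.star_apply, Complex.star_def,
    Function.comp_apply]
  gcongr with j _ k _
  calc (conj (z j) * (d j * (L j k * z k))).re = d j * (conj (z j) * (L j k * z k)).re := by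
        rw [mul_left_comm, Complex.re_ofReal_mul]
    _ ≤ d j * (metzlerMajorant L j k * (‖z j‖ * ‖z k‖)) :=
        mul_le_mul_of_nonneg_left (re_conj_mul_mul_le_metzlerMajorant L z j k) (hd j)
    _ ≤ d j * (C j k * (‖z j‖ * ‖z k‖)) := by gcongr; exacts [hd j, hLC j k]
    _ = ‖z j‖ * (d j * (C j k * ‖z k‖)) := by ring

end Matrix

theorem cqlf_from_diag_lyapunov_general {n N : ℕ}
    (hne : (Finset.univ : Finset (Fin N)).Nonempty)
    (V : Matrix (Fin n) (Fin n) ℂ) (hV : IsUnit V.det)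
    (A : Fin N → Matrix (Fin n) (Fin n) ℝ)
    (Λi : Fin N → Matrix (Fin n) (Fin n) ℂ)
    (hΛi : ∀ i, Λi i = V⁻¹ * (A i).map Complex.ofReal * V)
    (M : Fin N → Matrix (Fin n) (Fin n) ℝ)
    (hM : ∀ i a b, M i a b = if a = b then (Λi i a a).re else ‖Λi i a b‖)
    (Λ : Matrix (Fin n) (Fin n) ℝ)
    (hΛ : ∀ a b, Λ a b = Finset.univ.sup' hne (fun i => M i a b))
    (Λb : Matrix (Fin n) (Fin n) ℝ)
    (hge : ∀ a b, Λ a b ≤ Λb a b)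
    (d : Fin n → ℝ) (hd : ∀ i, 0 < d i)
    (hLyap : (-(Λbᵀ * Matrix.diagonal d + Matrix.diagonal d * Λb)).PosDef)
    (P : Matrix (Fin n) (Fin n) ℝ)
    (hP : P = ((V⁻¹)ᴴ * (Matrix.diagonal d).map Complex.ofReal * V⁻¹).map Complex.re) :
    P.IsSymm ∧ P.PosDef ∧ ∀ i, (-((A i)ᵀ * P + P * A i)).PosDef := by
  have hmajor : ∀ i j k, metzlerMajorant (Λi i) j k ≤ Λb j k := fun i j k =>
    calc metzlerMajorant (Λi i) j k = M i j k := (hM i j k).symm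
      _ ≤ Λ j k := hΛ j k ▸ Finset.le_sup' (fun i => M i j k) (Finset.mem_univ i)
      _ ≤ Λb j k := hge j k
  have hD : (diagonal d).map Complex.ofReal = diagonal (Complex.ofReal ∘ d) :=
    diagonal_map Complex.ofReal_zero
  have hVinj : Function.Injective (V⁻¹).mulVec :=
    mulVec_injective_of_isUnit (isUnit_nonsing_inv_iff.mpr ((isUnit_iff_isUnit_det V).mpr hV))
  have hN : ((V⁻¹)ᴴ * (diagonal d).map Complex.ofReal * V⁻¹).PosDef := by
    rw [hD]
    exact (PosDef.diagonal fun j => Complex.zero_lt_real.mpr (hd j)).conjTranspose_mul_mul_same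
      hVinj
  have hPsymm : P.IsSymm := hP ▸ hN.isHermitian.isSymm_map_re
  refine ⟨hPsymm, hP ▸ hN.map_re, fun i => .of_dotProduct_mulVec_pos
    (isHermitian_iff_isSymm.mpr (isSymm_transpose_mul_add_mul hPsymm (A i)).neg) fun x hx => ?_⟩
  set z := V⁻¹ *ᵥ (Complex.ofReal ∘ x) with hz
  have hw : (‖z ·‖) ≠ 0 := by
    have hz0 : z ≠ 0 := (hVinj.ne_iff' (mulVec_zero _)).mpr fun h =>
      hx (funext fun j => by simpa using congrFun h j)
    contrapose! hz0
    exact funext fun j => norm_eq_zero.mp (congrFun hz0 j)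
  have hAz : V⁻¹ *ᵥ (Complex.ofReal ∘ (A i *ᵥ x)) = Λi i *ᵥ z := by
    have : Complex.ofReal ∘ (A i *ᵥ x) = (A i).map Complex.ofReal *ᵥ (Complex.ofReal ∘ x) :=
      funext (RingHom.map_mulVec Complex.ofRealHom (A i) x)
    rw [this, hΛi, hz, mulVec_mulVec, mulVec_mulVec, Matrix.mul_assoc _ V, mul_nonsing_inv V hV,
      Matrix.mul_one]
  have hform : x ⬝ᵥ P *ᵥ (A i *ᵥ x) =
      (star z ⬝ᵥ diagonal (Complex.ofReal ∘ d) *ᵥ (Λi i *ᵥ z)).re := by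
    rw [hP, dotProduct_map_re_mulVec, dotProduct_conjTranspose_mul_mul_mulVec, hAz, hD]
  have hneg := hLyap.dotProduct_mulVec_pos hw
  rw [star_trivial, neg_mulVec, dotProduct_neg,
    dotProduct_transpose_mul_add_mul_mulVec (isSymm_diagonal d)] at hneg
  rw [star_trivial, neg_mulVec, dotProduct_neg, dotProduct_transpose_mul_add_mul_mulVec hPsymm,
    hform]
  linarith [re_star_dotProduct_diagonal_mulVec_le (hmajor i) (fun j => (hd j).le) z]

/-- If `Λ_i = V⁻¹ A_i V`, `M_i = 𝓜(Λ_i)`, `Λ = max_i M_i`, `Λ̄ ⪰ Λ` is Hurwitz and `D > 0`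
diagonal satisfies `Λ̄'D + DΛ̄ < 0`, then `P = Re((V⁻¹)* D V⁻¹)` is symmetric positive definite
and satisfies `A_i'P + P A_i < 0` for all `i` (a common quadratic Lyapunov function). -/
theorem cqlf_from_diag_lyapunov {n N : ℕ}
    (hne : (Finset.univ : Finset (Fin N)).Nonempty)
    (V : Matrix (Fin n) (Fin n) ℂ) (hV : IsUnit V.det)
    (A : Fin N → Matrix (Fin n) (Fin n) ℝ)
    (Λi : Fin N → Matrix (Fin n) (Fin n) ℂ)
    (hΛi : ∀ i, Λi i = V⁻¹ * (A i).map Complex.ofReal * V)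
    (M : Fin N → Matrix (Fin n) (Fin n) ℝ)
    (hM : ∀ i a b, M i a b = if a = b then (Λi i a a).re else ‖Λi i a b‖)
    (Λ : Matrix (Fin n) (Fin n) ℝ)
    (hΛ : ∀ a b, Λ a b = Finset.univ.sup' hne (fun i => M i a b))
    (Λb : Matrix (Fin n) (Fin n) ℝ)
    (hHur : ∀ μ ∈ spectrum ℂ (Λb.map Complex.ofReal), μ.re < 0)
    (hge : ∀ a b, Λ a b ≤ Λb a b)
    (d : Fin n → ℝ) (hd : ∀ i, 0 < d i)
    (hLyap : (-(Λbᵀ * Matrix.diagonal d + Matrix.diagonal d * Λb)).PosDef)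
    (P : Matrix (Fin n) (Fin n) ℝ)
    (hP : P = ((V⁻¹)ᴴ * (Matrix.diagonal d).map Complex.ofReal * V⁻¹).map Complex.re) :
    P.IsSymm ∧ P.PosDef ∧ ∀ i, (-((A i)ᵀ * P + P * A i)).PosDef :=
  cqlf_from_diag_lyapunov_general hne V hV A Λi hΛi M hM Λ hΛ Λb hge d hd hLyap P hP
end

section
/- Let f : ℝ^n_{≥0} → ℝ^n_{≥0} be continuous and CNI with f(β) ⪯ β for some β ⪰ 0, and let b = lim_{k→∞} f^k(β). Then for every ε ∈ ℝ^n with all components positive there exist k ∈ ℕ and γ ∈ ℝ^n with all components positive such that the k-th iterate of the map f_γ(x) := f(x) + γ applied to β satisfies f_γ^k(β) ≺ b + ε (strict componentwise inequality). -/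
open Matrix

private lemma cni_iter_nonneg {n : ℕ} (f : (Fin n → ℝ) → (Fin n → ℝ))
    (hmap : ∀ x, (∀ i, 0 ≤ x i) → ∀ i, 0 ≤ f x i)
    (β : Fin n → ℝ) (hβ : ∀ i, 0 ≤ β i) :
    ∀ k, ∀ i, 0 ≤ f^[k] β i := by
  intro k
  induction k with
  | zero => simpa using hβ
  | succ k ih =>
    rw [Function.iterate_succ_apply']
    exact hmap _ ih

private lemma cni_perturbed_key {n : ℕ} (f : (Fin n → ℝ) → (Fin n → ℝ))
    (hmap : ∀ x, (∀ i, 0 ≤ x i) → ∀ i, 0 ≤ f x i)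
    (hcont : ContinuousOn f {x | ∀ i, 0 ≤ x i})
    (hCNI : ∀ x y, (∀ i, 0 ≤ x i) → (∀ i, x i ≤ y i) → ∀ i, f x i ≤ f y i)
    (β : Fin n → ℝ) (hβ : ∀ i, 0 ≤ β i) :
    ∀ k : ℕ, ∀ ε : ℝ, 0 < ε → ∃ γ₀ : ℝ, 0 < γ₀ ∧ ∀ γ : ℝ, 0 < γ → γ ≤ γ₀ →
      ∀ i, 0 ≤ (fun x => fun j => f x j + γ)^[k] β i ∧
        f^[k] β i ≤ (fun x => fun j => f x j + γ)^[k] β i ∧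
        (fun x => fun j => f x j + γ)^[k] β i < f^[k] β i + ε := by
  intro k
  induction k with
  | zero =>
    intro ε hε
    exact ⟨ε, hε, fun γ hγ hγε i => ⟨hβ i, le_refl _, by simpa using hε⟩⟩
  | succ k ih =>
    intro ε hε
    set x₀ := f^[k] β with hx₀
    have hx₀S : x₀ ∈ {x : Fin n → ℝ | ∀ i, 0 ≤ x i} :=
      cni_iter_nonneg f hmap β hβ k
    have hcw : ContinuousWithinAt f {x : Fin n → ℝ | ∀ i, 0 ≤ x i} x₀ :=
      hcont x₀ hx₀S
    rw [Metric.continuousWithinAt_iff] at hcw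
    obtain ⟨δ, hδ, hδ'⟩ := hcw (ε / 2) (by linarith)
    obtain ⟨γ₀, hγ₀, hIH⟩ := ih δ hδ
    refine ⟨min γ₀ (ε / 2), lt_min hγ₀ (by linarith), ?_⟩
    intro γ hγ hγle i
    have hγ₀' : γ ≤ γ₀ := le_trans hγle (min_le_left _ _)
    have hγε : γ ≤ ε / 2 := le_trans hγle (min_le_right _ _)
    set y := (fun x => fun j => f x j + γ)^[k] β with hy
    have hys : ∀ j, 0 ≤ y j := fun j => (hIH γ hγ hγ₀' j).1
    have hylow : ∀ j, x₀ j ≤ y j := fun j => (hIH γ hγ hγ₀' j).2.1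
    have hyup : ∀ j, y j < x₀ j + δ := fun j => (hIH γ hγ hγ₀' j).2.2
    have hdist : dist y x₀ < δ := by
      rw [dist_pi_lt_iff hδ]
      intro j
      rw [Real.dist_eq, abs_lt]
      constructor
      · linarith [hylow j, hyup j]
      · linarith [hylow j, hyup j]
    have hfd : dist (f y) (f x₀) < ε / 2 := hδ' hys hdist
    have hfub : f y i < f x₀ i + ε / 2 := by
      have := le_trans (dist_le_pi_dist (f y) (f x₀) i) hfd.le
      rw [Real.dist_eq] at this
      have h2 := abs_lt.mp (lt_of_le_of_lt (dist_le_pi_dist (f y) (f x₀) i)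
        hfd)
      linarith [h2.2]
    have hit : (fun x => fun j => f x j + γ)^[k+1] β i = f y i + γ := by
      rw [Function.iterate_succ_apply']
    have hit' : f^[k+1] β i = f x₀ i := by
      rw [Function.iterate_succ_apply']
    refine ⟨?_, ?_, ?_⟩
    · rw [hit]
      have := hmap y hys i
      linarith
    · rw [hit, hit']
      have := hCNI x₀ y hx₀S hylow i
      linarith
    · rw [hit, hit']
      linarith

/-- For a continuous CNI self-map `f` of the nonnegative orthant with `f(β) ⪯ β` and limit
`b = lim f^k(β)`: for every positive `ε` there exist `k` and positive `γ` such that the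
`k`-th iterate of `f_γ(x) := f(x) + γ` at `β` is componentwise strictly below `b + ε`. -/
theorem cni_perturbed_iterates_close {n : ℕ} (f : (Fin n → ℝ) → (Fin n → ℝ))
    (hmap : ∀ x, (∀ i, 0 ≤ x i) → ∀ i, 0 ≤ f x i)
    (hcont : ContinuousOn f {x | ∀ i, 0 ≤ x i})
    (hCNI : ∀ x y, (∀ i, 0 ≤ x i) → (∀ i, x i ≤ y i) → ∀ i, f x i ≤ f y i)
    (β : Fin n → ℝ) (hβ : ∀ i, 0 ≤ β i) (hfβ : ∀ i, f β i ≤ β i)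
    (b : Fin n → ℝ) (hb : Filter.Tendsto (fun k => f^[k] β) Filter.atTop (nhds b)) :
    ∀ ε : Fin n → ℝ, (∀ i, 0 < ε i) →
      ∃ (k : ℕ) (γ : Fin n → ℝ), (∀ i, 0 < γ i) ∧
        ∀ i, (fun x => fun j => f x j + γ j)^[k] β i < b i + ε i := by
  intro ε hε
  rcases Nat.eq_zero_or_pos n with hn | hn
  · subst hn
    exact ⟨0, fun _ => 1, fun i => i.elim0, fun i => i.elim0⟩
  have hne : Nonempty (Fin n) := ⟨⟨0, hn⟩⟩
  set εm : ℝ := Finset.univ.inf' (Finset.univ_nonempty) ε with hεm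
  have hεm0 : 0 < εm := by
    rw [hεm]
    apply Finset.lt_inf'_iff (Finset.univ_nonempty) |>.mpr
    intro i _
    exact hε i
  have hεmle : ∀ i, εm ≤ ε i := fun i =>
    Finset.inf'_le _ (Finset.mem_univ i)
  -- choose k with f^[k] β close to b
  rw [Metric.tendsto_atTop] at hb
  obtain ⟨N, hN⟩ := hb (εm / 2) (by linarith)
  have hclose : ∀ i, f^[N] β i < b i + εm / 2 := by
    intro i
    have := lt_of_le_of_lt (dist_le_pi_dist (f^[N] β) b i) (hN N le_rfl)
    rw [Real.dist_eq] at this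
    linarith [(abs_lt.mp this).2]
  obtain ⟨γ₀, hγ₀, hkey⟩ := cni_perturbed_key f hmap hcont hCNI β hβ N (εm / 2)
    (by linarith)
  refine ⟨N, fun _ => γ₀, fun _ => hγ₀, ?_⟩
  intro i
  have h := (hkey γ₀ hγ₀ le_rfl i).2.2
  have heq : (fun x => fun j => f x j + (fun _ => γ₀) j)^[N] β i
      = (fun x => fun j => f x j + γ₀)^[N] β i := rfl
  rw [heq]
  have := hεmle i
  linarith [hclose i]
end

section
/- Let R ∈ ℝ^{n×n} be entrywise nonnegative with ρ(R) < 1, r ∈ ℝ^n_{≥0}, ℓ(x) = Rx + r, and b̃ = (I − R)⁻¹ r. Then for every ε ∈ ℝ^n with all components positive there exists β_ε ∈ ℝ^n_{≥0} with b̃ ⪯ β_ε ⪯ b̃ + ε and ℓ(β_ε) ≺ β_ε. -/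
/-!
By Gelfand's formula, `ρ(R) < 1` gives `R ^ k → 0`. Hence `1 - R` is invertible, and for
nonnegative `R` the inequality `R y ⪯ y` forces `y ⪰ 0` (iterate it and pass to the limit), so
`(1 - R)⁻¹` maps nonnegative vectors to nonnegative vectors. Then
`β = (1 - R)⁻¹ (r + α 𝟙) = b̃ + α (1 - R)⁻¹ 𝟙` works for small `α > 0`, since `ℓ β = β - α 𝟙`.
-/

open Filter Topology
open scoped NNReal ENNReal

theorem tendsto_pow_atTop_nhds_zero_of_spectralRadius_lt_one {A : Type*} [NormedRing A]
    [NormedAlgebra ℂ A] [CompleteSpace A] {a : A} (ha : spectralRadius ℂ a < 1) :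
    Tendsto (a ^ ·) atTop (𝓝 0) := by
  obtain ⟨c, hρc, hc1⟩ := ENNReal.lt_iff_exists_nnreal_btwn.mp ha
  have hroot : ∀ᶠ k : ℕ in atTop, (‖a ^ k‖₊ : ℝ≥0∞) ^ (1 / k : ℝ) < c :=
    (spectrum.pow_nnnorm_pow_one_div_tendsto_nhds_spectralRadius a).eventually_lt_const hρc
  have hgeom : ∀ᶠ k : ℕ in atTop, ‖a ^ k‖ ≤ (c : ℝ) ^ k := by
    filter_upwards [hroot, eventually_gt_atTop 0] with k hk hk0
    rw [one_div, ENNReal.rpow_inv_lt_iff (by positivity), ENNReal.rpow_natCast,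
      ← ENNReal.coe_pow, ENNReal.coe_lt_coe] at hk
    exact_mod_cast hk.le
  exact squeeze_zero_norm' hgeom
    (tendsto_pow_atTop_nhds_zero_of_lt_one c.coe_nonneg (by exact_mod_cast hc1))

theorem tendsto_pow_atTop_nhds_zero_of_forall_norm_lt_one {A : Type*} [NormedRing A]
    [NormedAlgebra ℂ A] [CompleteSpace A] {a : A} (ha : ∀ μ ∈ spectrum ℂ a, ‖μ‖ < 1) :
    Tendsto (a ^ ·) atTop (𝓝 0) := by
  cases subsingleton_or_nontrivial A
  · simpa only [Subsingleton.elim _ (0 : A)] using tendsto_const_nhds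
  refine tendsto_pow_atTop_nhds_zero_of_spectralRadius_lt_one ?_
  exact_mod_cast spectrum.spectralRadius_lt_of_forall_lt a fun μ hμ => by exact_mod_cast ha μ hμ

namespace Matrix

variable {n : Type*} [Fintype n] [DecidableEq n]

theorem mulVec_mono_of_nonneg {m n α : Type*} [Fintype n] [Semiring α] [PartialOrder α]
    [IsOrderedRing α] {M : Matrix m n α} (hM : ∀ i j, 0 ≤ M i j) {u v : n → α} (huv : u ≤ v) :
    M *ᵥ u ≤ M *ᵥ v :=
  fun i => dotProduct_le_dotProduct_of_nonneg_left huv (hM i)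

theorem tendsto_pow_atTop_nhds_zero_of_forall_norm_lt_one {A : Matrix n n ℂ}
    (hA : ∀ μ ∈ spectrum ℂ A, ‖μ‖ < 1) :
    Tendsto (A ^ ·) atTop (𝓝 0) := by
  -- any algebra norm will do: the topology it induces is the product topology
  let := Matrix.linftyOpNormedRing (n := n) (α := ℂ)
  let := Matrix.linftyOpNormedAlgebra (n := n) (α := ℂ) (R := ℂ)
  have : CompleteSpace (Matrix n n ℂ) := FiniteDimensional.complete ℂ _
  exact _root_.tendsto_pow_atTop_nhds_zero_of_forall_norm_lt_one hA

variable {R : Matrix n n ℝ}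

theorem tendsto_pow_atTop_nhds_zero_of_forall_norm_lt_one_map_ofReal
    (hρ : ∀ μ ∈ spectrum ℂ (R.map Complex.ofReal), ‖μ‖ < 1) :
    Tendsto (R ^ ·) atTop (𝓝 0) := by
  have hre : Continuous fun A : Matrix n n ℂ => A.map Complex.re :=
    continuous_id.matrix_map Complex.continuous_re
  have hmap : ∀ k : ℕ, (R.map Complex.ofReal ^ k).map Complex.re = R ^ k := fun k => by
    rw [show R.map Complex.ofReal = R.map Complex.ofRealHom from rfl, ← Matrix.map_pow,
      Matrix.map_map]
    ext
    simp
  simpa [hmap, Function.comp_def] using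
    (hre.tendsto 0).comp (tendsto_pow_atTop_nhds_zero_of_forall_norm_lt_one hρ)

theorem tendsto_pow_mulVec (hpow : Tendsto (R ^ ·) atTop (𝓝 0)) (v : n → ℝ) :
    Tendsto (fun k : ℕ => R ^ k *ᵥ v) atTop (𝓝 0) := by
  simpa [Function.comp_def] using
    ((continuous_id.matrix_mulVec continuous_const).tendsto 0).comp hpow

theorem nonneg_of_mulVec_le (hR : ∀ i j, 0 ≤ R i j) (hpow : Tendsto (R ^ ·) atTop (𝓝 0))
    {y : n → ℝ} (hy : R *ᵥ y ≤ y) : 0 ≤ y := by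
  have hle : ∀ k : ℕ, R ^ k *ᵥ y ≤ y := by
    intro k
    induction k with
    | zero => simp
    | succ k ih =>
      rw [pow_succ, ← mulVec_mulVec]
      exact (mulVec_mono_of_nonneg (pow_apply_nonneg hR k) hy).trans ih
  exact le_of_tendsto' (tendsto_pow_mulVec hpow y) hle

theorem isUnit_one_sub_of_tendsto_pow (hpow : Tendsto (R ^ ·) atTop (𝓝 0)) : IsUnit (1 - R) := by
  rw [← mulVec_injective_iff_isUnit]
  intro v w hvw
  have h1 : (1 - R) *ᵥ (v - w) = 0 := by rw [mulVec_sub, hvw, sub_self]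
  rw [sub_mulVec, one_mulVec, sub_eq_zero] at h1
  have hfix : ∀ k : ℕ, R ^ k *ᵥ (v - w) = v - w := by
    intro k
    induction k with
    | zero => simp
    | succ k ih => rw [pow_succ, ← mulVec_mulVec, ← h1, ih]
  have hlim := tendsto_pow_mulVec hpow (v - w)
  simp only [hfix] at hlim
  exact sub_eq_zero.mp (tendsto_nhds_unique tendsto_const_nhds hlim)

theorem mulVec_nonsing_inv_one_sub_add_self (h : IsUnit (1 - R)) (w : n → ℝ) :
    R *ᵥ ((1 - R)⁻¹ *ᵥ w) + w = (1 - R)⁻¹ *ᵥ w := by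
  have hw : (1 - R) *ᵥ ((1 - R)⁻¹ *ᵥ w) = w := by
    rw [mulVec_mulVec, mul_nonsing_inv _ ((isUnit_iff_isUnit_det _).mp h), one_mulVec]
  rw [sub_mulVec, one_mulVec] at hw
  exact (sub_eq_iff_eq_add'.mp hw).symm

theorem nonsing_inv_one_sub_mulVec_nonneg (hR : ∀ i j, 0 ≤ R i j)
    (hpow : Tendsto (R ^ ·) atTop (𝓝 0)) {w : n → ℝ} (hw : 0 ≤ w) :
    0 ≤ (1 - R)⁻¹ *ᵥ w := by
  refine nonneg_of_mulVec_le hR hpow ((le_add_of_nonneg_right hw).trans_eq ?_)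
  exact mulVec_nonsing_inv_one_sub_add_self (isUnit_one_sub_of_tendsto_pow hpow) w

end Matrix

open Matrix

theorem exists_pos_smul_le {ι : Type*} [Finite ι] (x ε : ι → ℝ) (hε : ∀ i, 0 < ε i) :
    ∃ α : ℝ, 0 < α ∧ α • x ≤ ε := by
  have hsmall : ∀ᶠ α in 𝓝[>] (0 : ℝ), ∀ i, α * x i < ε i := by
    refine eventually_all.2 fun i => nhdsWithin_le_nhds ?_
    exact ((continuous_mul_const (x i)).tendsto' 0 0 (zero_mul _)).eventually_lt_const (hε i)
  obtain ⟨α, hαx, hα⟩ := (hsmall.and self_mem_nhdsWithin).exists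
  exact ⟨α, hα, fun i => (hαx i).le⟩

/-- For `ℓ(x) = Rx + r` with `R ⪰ 0`, `ρ(R) < 1`, `r ⪰ 0`, and `b̃ = (I − R)⁻¹ r`:
for every positive `ε` there exists `β_ε` with `b̃ ⪯ β_ε ⪯ b̃ + ε` and `ℓ(β_ε) ≺ β_ε`. -/
theorem affine_subinvariant_near_fixed_point {n : ℕ} (R : Matrix (Fin n) (Fin n) ℝ)
    (hR : ∀ i j, 0 ≤ R i j)
    (hρ : ∀ μ ∈ spectrum ℂ (R.map Complex.ofReal), ‖μ‖ < 1)
    (r : Fin n → ℝ) (hr : ∀ i, 0 ≤ r i)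
    (ℓ : (Fin n → ℝ) → (Fin n → ℝ)) (hℓ : ∀ x, ℓ x = R.mulVec x + r)
    (btil : Fin n → ℝ) (hb : btil = (1 - R)⁻¹.mulVec r) :
    ∀ ε : Fin n → ℝ, (∀ i, 0 < ε i) →
      ∃ βε : Fin n → ℝ, (∀ i, 0 ≤ βε i) ∧
        (∀ i, btil i ≤ βε i) ∧ (∀ i, βε i ≤ btil i + ε i) ∧
        ∀ i, ℓ βε i < βε i := by
  intro ε hε
  have hpow := tendsto_pow_atTop_nhds_zero_of_forall_norm_lt_one_map_ofReal hρ
  have hx := nonsing_inv_one_sub_mulVec_nonneg hR hpow zero_le_one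
  obtain ⟨α, hα, hαx⟩ := exists_pos_smul_le ((1 - R)⁻¹ *ᵥ 1) ε hε
  have hβ : (1 - R)⁻¹ *ᵥ (r + α • 1) = btil + α • ((1 - R)⁻¹ *ᵥ 1) := by
    rw [mulVec_add, mulVec_smul, hb]
  refine ⟨(1 - R)⁻¹ *ᵥ (r + α • 1), nonsing_inv_one_sub_mulVec_nonneg hR hpow
    (add_nonneg hr (smul_nonneg hα.le zero_le_one)), fun i => ?_, fun i => ?_, fun i => ?_⟩
  · rw [hβ]
    exact le_add_of_nonneg_right (smul_nonneg hα.le hx i)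
  · rw [hβ]
    exact add_le_add le_rfl (hαx i)
  · have hfix := congrFun (mulVec_nonsing_inv_one_sub_add_self
      (isUnit_one_sub_of_tendsto_pow hpow) (r + α • 1)) i
    simp only [Pi.add_apply, Pi.smul_apply, Pi.one_apply, smul_eq_mul, mul_one] at hfix
    rw [hℓ, Pi.add_apply]
    linarith
end
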